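/- arXiv:math/0402175 — 7 statements merged into one kernel-verified Lean document; each statement's English description precedes it below -/
import Mathlib

section
/- Let X be a compact metric space with its Borel σ-algebra, let σ, τ : X → X be continuous maps with σ ∘ τ = id_X, and let μ, ν, λ be finite Borel measures on X with μ ≪ λ and ν ≪ λ. Set k_μ = d(μ.map τ)/d(λ.map τ) and k_ν = d(ν.map τ)/d(λ.map τ). If Borel functions φ, ψ : X → ℂ satisfy φ(x)·√((dμ/dλ)(x)) = ψ(x)·√((dν/dλ)(x)) for λ-almost every x, then φ(σ(x))·√(k_μ(x)) = ψ(σ(x))·√(k_ν(x)) for (λ.map τ)-almost every x. -/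
open MeasureTheory

/- On the image of an embedding `τ` the densities of pushforwards are the pulled-back densities
(`MeasurableEmbedding.rnDeriv_map`), and `σ` undoes `τ`, so the identity at `y` is the
hypothesis at `y` itself. -/
theorem MeasurableEmbedding.ae_map_comp_mul_sqrt_rnDeriv_map_eq {α β : Type*}
    [MeasurableSpace α] [MeasurableSpace β] {τ : α → β} (hτ : MeasurableEmbedding τ)
    {σ : β → α} (hστ : Function.LeftInverse σ τ)
    {μ ν lam : Measure α} [SigmaFinite μ] [SigmaFinite ν] [SigmaFinite lam] {φ ψ : α → ℂ}
    (h : ∀ᵐ x ∂lam,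
      φ x * (Real.sqrt ((μ.rnDeriv lam x).toReal) : ℂ)
        = ψ x * (Real.sqrt ((ν.rnDeriv lam x).toReal) : ℂ)) :
    ∀ᵐ y ∂(lam.map τ),
      φ (σ y) * (Real.sqrt (((μ.map τ).rnDeriv (lam.map τ) y).toReal) : ℂ)
        = ψ (σ y) * (Real.sqrt (((ν.map τ).rnDeriv (lam.map τ) y).toReal) : ℂ) := by
  rw [hτ.ae_map_iff]
  filter_upwards [h, hτ.rnDeriv_map μ lam, hτ.rnDeriv_map ν lam] with x hx hμx hνx
  rw [hστ x, hμx, hνx, hx]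

theorem statement3_general {X : Type*} [MetricSpace X] [CompactSpace X]
    [MeasurableSpace X] [BorelSpace X]
    (σ τ : X → X) (hτ : Continuous τ)
    (hστ : σ ∘ τ = id)
    (μ ν lam : Measure X) [IsFiniteMeasure μ] [IsFiniteMeasure ν]
    [IsFiniteMeasure lam]
    (φ ψ : X → ℂ)
    (h : ∀ᵐ x ∂lam,
      φ x * (Real.sqrt ((μ.rnDeriv lam x).toReal) : ℂ)
        = ψ x * (Real.sqrt ((ν.rnDeriv lam x).toReal) : ℂ)) :
    ∀ᵐ x ∂(lam.map τ),
      φ (σ x) * (Real.sqrt (((μ.map τ).rnDeriv (lam.map τ) x).toReal) : ℂ)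
        = ψ (σ x) * (Real.sqrt (((ν.map τ).rnDeriv (lam.map τ) x).toReal) : ℂ) := by
  have hleft : Function.LeftInverse σ τ := congrFun hστ
  have hemb : MeasurableEmbedding τ := (hτ.isClosedEmbedding hleft.injective).measurableEmbedding
  exact hemb.ae_map_comp_mul_sqrt_rnDeriv_map_eq hleft h

/-- The operator `S : class(φ,μ) ↦ class(φ∘σ, μ∘τ⁻¹)` is well defined on equivalence
classes: if `φ·√(dμ/dλ) = ψ·√(dν/dλ)` a.e. `λ`, then, with
`k_μ = d(μ∘τ⁻¹)/d(λ∘τ⁻¹)` and `k_ν = d(ν∘τ⁻¹)/d(λ∘τ⁻¹)`, one has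
`(φ∘σ)·√k_μ = (ψ∘σ)·√k_ν` a.e. `λ∘τ⁻¹`. -/
theorem statement3 {X : Type*} [MetricSpace X] [CompactSpace X]
    [MeasurableSpace X] [BorelSpace X]
    (σ τ : X → X) (hσ : Continuous σ) (hτ : Continuous τ)
    (hστ : σ ∘ τ = id)
    (μ ν lam : Measure X) [IsFiniteMeasure μ] [IsFiniteMeasure ν]
    [IsFiniteMeasure lam]
    (hμl : μ ≪ lam) (hνl : ν ≪ lam)
    (φ ψ : X → ℂ) (hφ : Measurable φ) (hψ : Measurable ψ)
    (h : ∀ᵐ x ∂lam,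
      φ x * (Real.sqrt ((μ.rnDeriv lam x).toReal) : ℂ)
        = ψ x * (Real.sqrt ((ν.rnDeriv lam x).toReal) : ℂ)) :
    ∀ᵐ x ∂(lam.map τ),
      φ (σ x) * (Real.sqrt (((μ.map τ).rnDeriv (lam.map τ) x).toReal) : ℂ)
        = ψ (σ x) * (Real.sqrt (((ν.map τ).rnDeriv (lam.map τ) x).toReal) : ℂ) :=
  statement3_general σ τ hτ hστ μ ν lam φ ψ h
end

section
/- Let X be a compact metric space with its Borel σ-algebra, let σ : X → X be continuous and surjective, and let τ₁, τ₂ : X → X be continuous maps with σ ∘ τ₁ = id_X, σ ∘ τ₂ = id_X, and τ₁(X) ∩ τ₂(X) = ∅. Let μ, ν be finite Borel measures on X, let φ, ψ : X → ℂ be Borel functions with ∫|φ|²dμ < ∞ and ∫|ψ|²dν < ∞, and let λ be a finite Borel measure with μ.map τ₁ ≪ λ and ν.map τ₂ ≪ λ. Then ∫_X conj(φ(σ(x))) · ψ(σ(x)) · √((d(μ.map τ₁)/dλ)(x)) · √((d(ν.map τ₂)/dλ)(x)) dλ(x) = 0. -/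
/-!
The density of `μ.map τ₁` with respect to `λ` vanishes `λ`-a.e. off `range τ₁`, since
`μ.map τ₁` is carried by `range τ₁`; likewise for `ν.map τ₂` and `range τ₂`. These ranges are
disjoint, so at `λ`-almost every point one of the two square-root factors of the integrand is zero.
-/

open MeasureTheory Set

namespace MeasureTheory.Measure

variable {α β : Type*} [MeasurableSpace α] [MeasurableSpace β]

lemma rnDeriv_eq_zero_ae_of_measure_eq_zero {μ ν : Measure α} {s : Set α}
    (hs : MeasurableSet s) (hμs : μ s = 0) : ∀ᵐ x ∂ν, x ∈ s → μ.rnDeriv ν x = 0 := by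
  refine (setLIntegral_eq_zero_iff hs (μ.measurable_rnDeriv ν)).mp ?_
  exact nonpos_iff_eq_zero.mp (hμs ▸ setLIntegral_rnDeriv_le s)

lemma rnDeriv_map_eq_zero_ae_of_notMem_range (f : β → α) (hf : MeasurableSet (range f))
    (μ : Measure β) (ν : Measure α) : ∀ᵐ x ∂ν, x ∉ range f → (μ.map f).rnDeriv ν x = 0 :=
  rnDeriv_eq_zero_ae_of_measure_eq_zero hf.compl (ae_iff.mp (ae_map_mem_range f hf μ))

end MeasureTheory.Measure

theorem statement4_general {X : Type*} [MetricSpace X] [CompactSpace X]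
    [MeasurableSpace X] [BorelSpace X]
    (σ τ₁ τ₂ : X → X)
    (hτ₁ : Continuous τ₁) (hτ₂ : Continuous τ₂)
    (hdisj : Set.range τ₁ ∩ Set.range τ₂ = ∅)
    (μ ν lam : Measure X)
    (φ ψ : X → ℂ) :
    ∫ x, (starRingEnd ℂ) (φ (σ x)) * ψ (σ x)
        * (Real.sqrt (((μ.map τ₁).rnDeriv lam x).toReal) : ℂ)
        * (Real.sqrt (((ν.map τ₂).rnDeriv lam x).toReal) : ℂ) ∂lam = 0 := by
  have h₁ := Measure.rnDeriv_map_eq_zero_ae_of_notMem_range τ₁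
    (isCompact_range hτ₁).isClosed.measurableSet μ lam
  have h₂ := Measure.rnDeriv_map_eq_zero_ae_of_notMem_range τ₂
    (isCompact_range hτ₂).isClosed.measurableSet ν lam
  refine integral_eq_zero_of_ae ?_
  filter_upwards [h₁, h₂] with x hx₁ hx₂
  by_cases hx : x ∈ range τ₁
  · simp [hx₂ ((disjoint_iff_inter_eq_empty.mpr hdisj).notMem_of_mem_left hx)]
  · simp [hx₁ hx]

/-- Two branches `τ₁, τ₂` of the inverse of `σ` with disjoint images give isometries
with orthogonal ranges on the Hilbert space of square densities:
`⟨S₁(φ,μ) | S₂(ψ,ν)⟩ = 0`. -/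
theorem statement4 {X : Type*} [MetricSpace X] [CompactSpace X]
    [MeasurableSpace X] [BorelSpace X]
    (σ τ₁ τ₂ : X → X) (hσc : Continuous σ) (hσs : Function.Surjective σ)
    (hτ₁ : Continuous τ₁) (hτ₂ : Continuous τ₂)
    (hστ₁ : σ ∘ τ₁ = id) (hστ₂ : σ ∘ τ₂ = id)
    (hdisj : Set.range τ₁ ∩ Set.range τ₂ = ∅)
    (μ ν lam : Measure X) [IsFiniteMeasure μ] [IsFiniteMeasure ν]
    [IsFiniteMeasure lam]
    (φ ψ : X → ℂ) (hφ : Measurable φ) (hψ : Measurable ψ)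
    (hφ2 : MemLp φ 2 μ) (hψ2 : MemLp ψ 2 ν)
    (hμl : μ.map τ₁ ≪ lam) (hνl : ν.map τ₂ ≪ lam) :
    ∫ x, (starRingEnd ℂ) (φ (σ x)) * ψ (σ x)
        * (Real.sqrt (((μ.map τ₁).rnDeriv lam x).toReal) : ℂ)
        * (Real.sqrt (((ν.map τ₂).rnDeriv lam x).toReal) : ℂ) ∂lam = 0 :=
  statement4_general σ τ₁ τ₂ hτ₁ hτ₂ hdisj μ ν lam φ ψ
end

section
/- Let X be a compact metric space with its Borel σ-algebra, let σ, τ : X → X be continuous maps with σ ∘ τ = id_X, let λ be a finite Borel measure on X, and let μ, ν be finite Borel measures with μ ≪ λ and ν ≪ λ.map τ. Then for all Borel functions φ, ψ : X → ℂ with ∫|φ|²dμ < ∞ and ∫|ψ|²dν < ∞, one has ∫_X conj(φ(σ(x))) · ψ(x) · √((d(μ.map τ)/d(λ.map τ))(x)) · √((dν/d(λ.map τ))(x)) d(λ.map τ)(x) = ∫_X conj(φ(x)) · ψ(τ(x)) · √((dμ/dλ)(x)) · √((dν/d(λ.map τ))(τ(x))) dλ(x). -/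
open MeasureTheory

/-! A continuous injection of a compact space is a closed embedding, hence a measurable embedding,
and Radon–Nikodym derivatives commute with pushforward along a measurable embedding. So the
left-hand side is the integral over `λ` of the integrand evaluated at `τ x`, where
`σ (τ x) = x` and `d(μ.map τ)/d(λ.map τ) ∘ τ = dμ/dλ` almost everywhere. -/

theorem MeasurableEmbedding.integral_map_rnDeriv_map {α β E : Type*} [MeasurableSpace α]
    [MeasurableSpace β] [NormedAddCommGroup E] [NormedSpace ℝ E] {f : α → β}
    (hf : MeasurableEmbedding f) (μ ν : Measure α) [SigmaFinite μ] [SigmaFinite ν]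
    (G : β → ENNReal → E) :
    ∫ y, G y ((μ.map f).rnDeriv (ν.map f) y) ∂(ν.map f) = ∫ x, G (f x) (μ.rnDeriv ν x) ∂ν := by
  rw [hf.integral_map]
  refine integral_congr_ae ?_
  filter_upwards [hf.rnDeriv_map μ ν] with x hx
  rw [hx]

theorem statement5_general {X : Type*} [MetricSpace X] [CompactSpace X]
    [MeasurableSpace X] [BorelSpace X]
    (σ τ : X → X) (hτ : Continuous τ)
    (hστ : σ ∘ τ = id)
    (lam μ ν : Measure X) [IsFiniteMeasure lam] [IsFiniteMeasure μ]
    (φ ψ : X → ℂ) :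
    ∫ x, (starRingEnd ℂ) (φ (σ x)) * ψ x
        * (Real.sqrt (((μ.map τ).rnDeriv (lam.map τ) x).toReal) : ℂ)
        * (Real.sqrt ((ν.rnDeriv (lam.map τ) x).toReal) : ℂ) ∂(lam.map τ)
      = ∫ x, (starRingEnd ℂ) (φ x) * ψ (τ x)
          * (Real.sqrt ((μ.rnDeriv lam x).toReal) : ℂ)
          * (Real.sqrt ((ν.rnDeriv (lam.map τ) (τ x)).toReal) : ℂ) ∂lam := by
  have hleft : Function.LeftInverse σ τ := congrFun hστ
  have hemb : MeasurableEmbedding τ :=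
    (hτ.isClosedEmbedding hleft.injective).measurableEmbedding
  rw [hemb.integral_map_rnDeriv_map μ lam fun y r ↦ (starRingEnd ℂ) (φ (σ y)) * ψ y
    * (Real.sqrt r.toReal : ℂ) * (Real.sqrt ((ν.rnDeriv (lam.map τ) y).toReal) : ℂ)]
  simp only [hleft _]

/-- Change-of-variables identity identifying the adjoint `S* : (φ,μ) ↦ (φ∘τ, μ∘σ⁻¹)`
of the isometry `S : (φ,μ) ↦ (φ∘σ, μ∘τ⁻¹)` on the range of `S`:
`⟨S(φ,μ) | (ψ,ν)⟩` computed over `λ∘τ⁻¹` equals the corresponding integral over `λ`. -/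
theorem statement5 {X : Type*} [MetricSpace X] [CompactSpace X]
    [MeasurableSpace X] [BorelSpace X]
    (σ τ : X → X) (hσ : Continuous σ) (hτ : Continuous τ)
    (hστ : σ ∘ τ = id)
    (lam μ ν : Measure X) [IsFiniteMeasure lam] [IsFiniteMeasure μ]
    [IsFiniteMeasure ν]
    (hμl : μ ≪ lam) (hνl : ν ≪ lam.map τ)
    (φ ψ : X → ℂ) (hφ : Measurable φ) (hψ : Measurable ψ)
    (hφ2 : MemLp φ 2 μ) (hψ2 : MemLp ψ 2 ν) :
    ∫ x, (starRingEnd ℂ) (φ (σ x)) * ψ x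
        * (Real.sqrt (((μ.map τ).rnDeriv (lam.map τ) x).toReal) : ℂ)
        * (Real.sqrt ((ν.rnDeriv (lam.map τ) x).toReal) : ℂ) ∂(lam.map τ)
      = ∫ x, (starRingEnd ℂ) (φ x) * ψ (τ x)
          * (Real.sqrt ((μ.rnDeriv lam x).toReal) : ℂ)
          * (Real.sqrt ((ν.rnDeriv (lam.map τ) (τ x)).toReal) : ℂ) ∂lam :=
  statement5_general σ τ hτ hστ lam μ ν φ ψ
end

section
/- Let X be a compact metric space with its Borel σ-algebra, let σ, τ : X → X be continuous maps with σ ∘ τ = id_X, let μ be a Borel probability measure on X with μ.map τ ≪ μ, and set p = d(μ.map τ)/dμ. Then for all φ, ψ ∈ L²(X, μ): ∫_X conj(φ(x)) · ψ(σ(x)) · √(p(x)) dμ(x) = ∫_X conj(φ(τ(x))) · ψ(x) · (√(p(τ(x))))⁻¹ dμ(x), where (√t)⁻¹ is interpreted with the convention 0⁻¹ = 0. Consequently the adjoint of the isometry S_μ : φ ↦ (φ∘σ)·√p on L²(X, μ) is given by (S_μ* φ)(x) = φ(τ(x)) · (√(p(τ(x))))⁻¹. -/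
open MeasureTheory

/-!
Write `ν = μ.map τ = p • μ`. Since `t * (√t)⁻¹ = √t`, integrating against `√p • μ` is
integrating against `(√p)⁻¹ • ν`, and `p * ‖(√p)⁻¹ • f‖² ≤ ‖f‖²` keeps `(√p)⁻¹ • f` in `L²(ν)`.
As `τ` has the continuous left inverse `σ`, it is a closed, hence measurable, embedding, so
`ν`-integrals and `L²(ν)` pull back along `τ` to `μ`, where `ψ ∘ σ ∘ τ = ψ`.
-/

section

variable {α E : Type*} [MeasurableSpace α] [NormedAddCommGroup E] [NormedSpace ℝ E]
  {μ ν : Measure α} [Measure.HaveLebesgueDecomposition μ ν] [SigmaFinite μ]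

theorem integral_sqrt_rnDeriv_smul (hμν : μ ≪ ν) (f : α → E) :
    ∫ x, √(μ.rnDeriv ν x).toReal • f x ∂ν = ∫ x, (√(μ.rnDeriv ν x).toReal)⁻¹ • f x ∂μ := by
  rw [← integral_rnDeriv_smul hμν]
  simp_rw [smul_smul, ← div_eq_mul_inv, Real.div_sqrt]

theorem MeasureTheory.MemLp.inv_sqrt_rnDeriv_smul (hμν : μ ≪ ν) {f : α → E} (hf : MemLp f 2 ν) :
    MemLp (fun x => (√(μ.rnDeriv ν x).toReal)⁻¹ • f x) 2 μ := by
  have hmeas : AEStronglyMeasurable (fun x => (√(μ.rnDeriv ν x).toReal)⁻¹ • f x) ν :=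
    (Measure.measurable_rnDeriv μ ν).ennreal_toReal.sqrt.inv.aestronglyMeasurable.smul hf.1
  refine (memLp_two_iff_integrable_sq_norm (hmeas.mono_ac hμν)).2 ?_
  refine (integrable_rnDeriv_smul_iff hμν).1 ?_
  have hρ : AEStronglyMeasurable (fun x => (μ.rnDeriv ν x).toReal) ν :=
    (Measure.measurable_rnDeriv μ ν).ennreal_toReal.aestronglyMeasurable
  refine (hf.integrable_norm_pow two_ne_zero).mono' (hρ.smul (hmeas.norm.pow 2))
    (ae_of_all _ fun x => ?_)
  set t := (μ.rnDeriv ν x).toReal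
  have ht : 0 ≤ t := ENNReal.toReal_nonneg
  calc ‖t • ‖(√t)⁻¹ • f x‖ ^ 2‖ = t * t⁻¹ * ‖f x‖ ^ 2 := by
        rw [norm_smul, Real.norm_of_nonneg ht, norm_pow, norm_norm, norm_smul, mul_pow,
          norm_inv, Real.norm_of_nonneg (Real.sqrt_nonneg t), inv_pow, Real.sq_sqrt ht, mul_assoc]
    _ ≤ ‖f x‖ ^ 2 := mul_le_of_le_one_left (by positivity) mul_inv_le_one

end

theorem statement7_general {X : Type*} [MetricSpace X]
    [MeasurableSpace X] [BorelSpace X]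
    (σ τ : X → X) (hσ : Continuous σ) (hτ : Continuous τ)
    (hστ : σ ∘ τ = id)
    (μ : Measure X) [IsProbabilityMeasure μ]
    (hac : μ.map τ ≪ μ)
    (p : X → ENNReal) (hp : p = (μ.map τ).rnDeriv μ)
    (φ ψ : X → ℂ) (hφ : MemLp φ 2 μ) :
    (∫ x, (starRingEnd ℂ) (φ x) * ψ (σ x) * (Real.sqrt ((p x).toReal) : ℂ) ∂μ
      = ∫ x, (starRingEnd ℂ) (φ (τ x)) * ψ x
          * (((Real.sqrt ((p (τ x)).toReal))⁻¹ : ℝ) : ℂ) ∂μ)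
    ∧ MemLp (fun x => φ (τ x) * (((Real.sqrt ((p (τ x)).toReal))⁻¹ : ℝ) : ℂ)) 2 μ := by
  have hτσ : Function.LeftInverse σ τ := congrFun hστ
  have hτ_emb : MeasurableEmbedding τ := (hτσ.isClosedEmbedding hσ hτ).measurableEmbedding
  subst hp
  simp_rw [mul_comm _ ((_ : ℝ) : ℂ), ← Complex.real_smul]
  constructor
  · calc _ = ∫ y, (√((μ.map τ).rnDeriv μ y).toReal)⁻¹ • (starRingEnd ℂ (φ y) * ψ (σ y))
          ∂μ.map τ := integral_sqrt_rnDeriv_smul hac _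
      _ = _ := by rw [hτ_emb.integral_map]; simp_rw [hτσ _]
  · exact hτ_emb.memLp_map_measure_iff.1 (hφ.inv_sqrt_rnDeriv_smul hac)

/-- The adjoint of the isometry `S_μ : φ ↦ (φ∘σ)·√p`, `p = d(μ∘τ⁻¹)/dμ`, on `L²(X,μ)` is
`S_μ* φ = (φ∘τ)·(√(p∘τ))⁻¹` (convention `0⁻¹ = 0`): one has the pairing identity
`⟨φ | S_μ ψ⟩ = ⟨S_μ* φ | ψ⟩` for all `φ, ψ ∈ L²(μ)`, and `S_μ* φ ∈ L²(μ)`. -/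
theorem statement7 {X : Type*} [MetricSpace X] [CompactSpace X]
    [MeasurableSpace X] [BorelSpace X]
    (σ τ : X → X) (hσ : Continuous σ) (hτ : Continuous τ)
    (hστ : σ ∘ τ = id)
    (μ : Measure X) [IsProbabilityMeasure μ]
    (hac : μ.map τ ≪ μ)
    (p : X → ENNReal) (hp : p = (μ.map τ).rnDeriv μ)
    (φ ψ : X → ℂ) (hφ : MemLp φ 2 μ) (hψ : MemLp ψ 2 μ) :
    (∫ x, (starRingEnd ℂ) (φ x) * ψ (σ x) * (Real.sqrt ((p x).toReal) : ℂ) ∂μ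
      = ∫ x, (starRingEnd ℂ) (φ (τ x)) * ψ x
          * (((Real.sqrt ((p (τ x)).toReal))⁻¹ : ℝ) : ℂ) ∂μ)
    ∧ MemLp (fun x => φ (τ x) * (((Real.sqrt ((p (τ x)).toReal))⁻¹ : ℝ) : ℂ)) 2 μ :=
  statement7_general σ τ hσ hτ hστ μ hac p hp φ ψ hφ
end

section
/- (Hutchinson) Let X be a nonempty compact metric space with metric d, let N ≥ 1, and let τ₁, …, τ_N : X → X satisfy d(τ_i(x), τ_i(y)) ≤ C·d(x,y) for all x, y ∈ X and all i, for some constant 0 < C < 1. Let p₁, …, p_N > 0 with ∑_{i=1}^N p_i = 1. Then there exists a unique Borel probability measure μ on X such that ∑_{i=1}^N p_i · (μ.map τ_i) = μ. -/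
/-!
The Hutchinson operator `T μ = ∑ pᵢ • τᵢ₊μ` is a contraction for the Kantorovich–Rubinstein
distance: testing `T μ` and `T ν` against a `K`-Lipschitz `f` amounts to testing `μ` and `ν`
against the `K C`-Lipschitz functions `f ∘ τᵢ`. Starting from the bound `diam X`, the iterates
`Tⁿ μ` and `Tⁿ ν` are therefore `Cⁿ diam X`-close. Two fixed points are thus not separated by any
Lipschitz function, and Lipschitz functions (thickened indicators of closed sets) determine a
finite Borel measure. For existence, the probability measures on the compact space `X` form a
compact space, so the orbit `Tⁿ δ_{x₀}` has a cluster point `μ`; the defect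
`ν ↦ ∫ f dν - ∫ f d(T ν)` is weakly continuous and tends to `0` along the orbit, so it vanishes
at `μ`.
-/

open MeasureTheory Filter Topology Metric
open scoped NNReal

namespace Hutchinson

variable {X ι : Type*}

section Operator

variable [MeasurableSpace X] [Fintype ι]

noncomputable def hutchinsonOp (p : ι → ℝ) (τ : ι → X → X) (μ : Measure X) : Measure X :=
  ∑ i, ENNReal.ofReal (p i) • μ.map (τ i)

variable {p : ι → ℝ} {τ : ι → X → X}

lemma isProbabilityMeasure_hutchinsonOp (hp : ∀ i, 0 ≤ p i) (hsum : ∑ i, p i = 1)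
    (hτ : ∀ i, Measurable (τ i)) (μ : Measure X) [IsProbabilityMeasure μ] :
    IsProbabilityMeasure (hutchinsonOp p τ μ) := by
  constructor
  simp only [hutchinsonOp, Measure.coe_finsetSum, Finset.sum_apply, Measure.smul_apply,
    Measure.map_apply (hτ _) MeasurableSet.univ, Set.preimage_univ, measure_univ, smul_eq_mul,
    mul_one]
  rw [← ENNReal.ofReal_sum_of_nonneg fun i _ => hp i, hsum, ENNReal.ofReal_one]

lemma isProbabilityMeasure_iterate_hutchinsonOp (hp : ∀ i, 0 ≤ p i) (hsum : ∑ i, p i = 1)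
    (hτ : ∀ i, Measurable (τ i)) (μ : Measure X) [IsProbabilityMeasure μ] (n : ℕ) :
    IsProbabilityMeasure ((hutchinsonOp p τ)^[n] μ) := by
  induction n with
  | zero => assumption
  | succ n ih =>
    rw [Function.iterate_succ_apply']
    exact isProbabilityMeasure_hutchinsonOp hp hsum hτ _

end Operator

section Kantorovich

variable [PseudoMetricSpace X] [MeasurableSpace X]

theorem _root_.MeasureTheory.Measure.ext_of_forall_lipschitzWith_integral_eq [BorelSpace X]
    {μ ν : Measure X} [IsFiniteMeasure μ] [IsFiniteMeasure ν]
    (h : ∀ (K : ℝ≥0) (f : X → ℝ), LipschitzWith K f → ∫ x, f x ∂μ = ∫ x, f x ∂ν) : μ = ν := by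
  have hclosed {F : Set X} (hF : IsClosed F) : μ F = ν F := by
    have hδ : ∀ n : ℕ, (0 : ℝ) < 1 / (n + 1) := fun _ => Nat.one_div_pos_of_nat
    have hμ := tendsto_integral_thickenedIndicator_of_isClosed μ hF hδ
      tendsto_one_div_add_atTop_nhds_zero_nat
    have hν := tendsto_integral_thickenedIndicator_of_isClosed ν hF hδ
      tendsto_one_div_add_atTop_nhds_zero_nat
    have hlip (n : ℕ) : LipschitzWith _ fun x => (thickenedIndicator (hδ n) F x : ℝ) :=
      (LipschitzWith.subtype_val _).comp (lipschitzWith_thickenedIndicator (hδ n) F)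
    simp_rw [h _ _ (hlip _)] at hμ
    rw [← measureReal_eq_measureReal_iff]
    exact tendsto_nhds_unique hμ hν
  exact ext_of_generate_finite _ (BorelSpace.measurable_eq.trans borel_eq_generateFrom_isClosed)
    isPiSystem_isClosed (fun F hF => hclosed hF) (hclosed isClosed_univ)

/-- The dual (Kantorovich–Rubinstein) form of `W₁(μ, ν) ≤ ε`. -/
def KantorovichLE (μ ν : Measure X) (ε : ℝ) : Prop :=
  ∀ (K : ℝ≥0) (f : X → ℝ), LipschitzWith K f → |∫ x, f x ∂μ - ∫ x, f x ∂ν| ≤ K * ε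

lemma tendsto_integral_sub_of_kantorovichLE {μ ν : ℕ → Measure X} {ε : ℕ → ℝ}
    (hμν : ∀ n, KantorovichLE (μ n) (ν n) (ε n)) (hε : Tendsto ε atTop (𝓝 0)) {K : ℝ≥0}
    {f : X → ℝ} (hf : LipschitzWith K f) :
    Tendsto (fun n => ∫ x, f x ∂μ n - ∫ x, f x ∂ν n) atTop (𝓝 0) := by
  refine squeeze_zero_norm (fun n => hμν n K f hf) ?_
  simpa using hε.const_mul (K : ℝ)

lemma kantorovichLE_diam [OpensMeasurableSpace X] [CompactSpace X] (μ ν : Measure X)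
    [IsProbabilityMeasure μ] [IsProbabilityMeasure ν] :
    KantorovichLE μ ν (diam (Set.univ : Set X)) := by
  intro K f hf
  have := nonempty_of_isProbabilityMeasure μ
  obtain ⟨a, -, ha⟩ := isCompact_univ.exists_isMaxOn Set.univ_nonempty hf.continuous.continuousOn
  obtain ⟨b, -, hb⟩ := isCompact_univ.exists_isMinOn Set.univ_nonempty hf.continuous.continuousOn
  have hbounds (m : Measure X) [IsProbabilityMeasure m] :
      f b ≤ ∫ x, f x ∂m ∧ ∫ x, f x ∂m ≤ f a := by
    have hint : Integrable f m :=
      hf.continuous.integrable_of_hasCompactSupport (.of_compactSpace f)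
    constructor
    · simpa using integral_mono (integrable_const (f b)) hint fun x => hb (Set.mem_univ x)
    · simpa using integral_mono hint (integrable_const (f a)) fun x => ha (Set.mem_univ x)
  obtain ⟨hμb, hμa⟩ := hbounds μ
  obtain ⟨hνb, hνa⟩ := hbounds ν
  calc |∫ x, f x ∂μ - ∫ x, f x ∂ν| ≤ f a - f b := abs_sub_le_iff.2 ⟨by linarith, by linarith⟩
    _ ≤ K * dist a b := (le_abs_self _).trans (hf.dist_le_mul a b)
    _ ≤ K * diam (Set.univ : Set X) := by
      gcongr; exact dist_le_diam_of_mem isCompact_univ.isBounded trivial trivial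

end Kantorovich

variable (X) in
lemma tendsto_pow_mul_diam_zero [PseudoMetricSpace X] {C : ℝ≥0} (hC : C < 1) :
    Tendsto (fun n : ℕ => (C : ℝ) ^ n * diam (Set.univ : Set X)) atTop (𝓝 0) := by
  simpa using (tendsto_pow_atTop_nhds_zero_of_lt_one C.coe_nonneg hC).mul_const
    (diam (Set.univ : Set X))

section Contraction

variable [MetricSpace X] [MeasurableSpace X] [BorelSpace X] [CompactSpace X] [Fintype ι]
  {p : ι → ℝ} {τ : ι → X → X}

lemma integral_hutchinsonOp (hp : ∀ i, 0 ≤ p i) (hτ : ∀ i, Continuous (τ i))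
    (μ : Measure X) [IsFiniteMeasure μ] {f : X → ℝ} (hf : Continuous f) :
    ∫ x, f x ∂hutchinsonOp p τ μ = ∑ i, p i * ∫ x, f (τ i x) ∂μ := by
  have hint (ν : Measure X) [IsFiniteMeasure ν] : Integrable f ν :=
    hf.integrable_of_hasCompactSupport (.of_compactSpace f)
  rw [hutchinsonOp,
    integral_finsetSum_measure fun i _ => (hint _).smul_measure ENNReal.ofReal_ne_top]
  refine Finset.sum_congr rfl fun i _ => ?_
  rw [integral_smul_measure, integral_map (hτ i).aemeasurable hf.aestronglyMeasurable,
    ENNReal.toReal_ofReal (hp i), smul_eq_mul]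

lemma KantorovichLE.hutchinsonOp {C : ℝ≥0} (hp : ∀ i, 0 ≤ p i) (hsum : ∑ i, p i = 1)
    (hτ : ∀ i, LipschitzWith C (τ i)) {μ ν : Measure X} [IsFiniteMeasure μ] [IsFiniteMeasure ν]
    {ε : ℝ} (hμν : KantorovichLE μ ν ε) :
    KantorovichLE (hutchinsonOp p τ μ) (hutchinsonOp p τ ν) (C * ε) := by
  intro K f hf
  rw [integral_hutchinsonOp hp (fun i => (hτ i).continuous) μ hf.continuous,
    integral_hutchinsonOp hp (fun i => (hτ i).continuous) ν hf.continuous,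
    ← Finset.sum_sub_distrib]
  calc |∑ i, (p i * ∫ x, f (τ i x) ∂μ - p i * ∫ x, f (τ i x) ∂ν)|
      ≤ ∑ i, p i * |∫ x, f (τ i x) ∂μ - ∫ x, f (τ i x) ∂ν| := by
        refine (Finset.abs_sum_le_sum_abs _ _).trans_eq (Finset.sum_congr rfl fun i _ => ?_)
        rw [← mul_sub, abs_mul, abs_of_nonneg (hp i)]
    _ ≤ ∑ i, p i * (K * C * ε) := by
        gcongr with i
        · exact hp i
        · exact_mod_cast hμν (K * C) _ (hf.comp (hτ i))
    _ = K * (C * ε) := by rw [← Finset.sum_mul, hsum]; ring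

lemma kantorovichLE_iterate_hutchinsonOp {C : ℝ≥0} (hp : ∀ i, 0 ≤ p i) (hsum : ∑ i, p i = 1)
    (hτ : ∀ i, LipschitzWith C (τ i)) (μ ν : Measure X) [IsProbabilityMeasure μ]
    [IsProbabilityMeasure ν] (n : ℕ) :
    KantorovichLE ((hutchinsonOp p τ)^[n] μ) ((hutchinsonOp p τ)^[n] ν)
      (C ^ n * diam (Set.univ : Set X)) := by
  induction n with
  | zero => simpa using kantorovichLE_diam μ ν
  | succ n ih =>
    have hmeas i := (hτ i).continuous.measurable
    have := isProbabilityMeasure_iterate_hutchinsonOp hp hsum hmeas μ n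
    have := isProbabilityMeasure_iterate_hutchinsonOp hp hsum hmeas ν n
    rw [Function.iterate_succ_apply', Function.iterate_succ_apply', pow_succ', mul_assoc]
    exact ih.hutchinsonOp hp hsum hτ

lemma integral_sub_integral_hutchinsonOp (hp : ∀ i, 0 ≤ p i) (hτ : ∀ i, Continuous (τ i))
    (μ : Measure X) [IsFiniteMeasure μ] {f : X → ℝ} (hf : Continuous f) :
    ∫ x, f x ∂μ - ∫ x, f x ∂hutchinsonOp p τ μ = ∫ x, (f x - ∑ i, p i * f (τ i x)) ∂μ := by
  have hint {g : X → ℝ} (hg : Continuous g) : Integrable g μ :=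
    hg.integrable_of_hasCompactSupport (.of_compactSpace g)
  rw [integral_hutchinsonOp hp hτ μ hf, integral_sub (hint hf) (hint (by fun_prop)),
    integral_finsetSum _ fun i _ => hint (by fun_prop)]
  simp_rw [integral_const_mul]

end Contraction

section FixedPoint

variable [MetricSpace X] [MeasurableSpace X] [BorelSpace X] [CompactSpace X] [Fintype ι]
  {p : ι → ℝ} {τ : ι → X → X} {C : ℝ≥0}

lemma eq_of_hutchinsonOp_eq_self (hC : C < 1) (hp : ∀ i, 0 ≤ p i) (hsum : ∑ i, p i = 1)
    (hτ : ∀ i, LipschitzWith C (τ i)) {μ ν : Measure X} [IsProbabilityMeasure μ]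
    [IsProbabilityMeasure ν] (hμ : hutchinsonOp p τ μ = μ) (hν : hutchinsonOp p τ ν = ν) :
    μ = ν := by
  refine Measure.ext_of_forall_lipschitzWith_integral_eq fun K f hf => ?_
  have hμν (n : ℕ) : KantorovichLE μ ν (C ^ n * diam (Set.univ : Set X)) := by
    simpa only [Function.iterate_fixed hμ, Function.iterate_fixed hν] using
      kantorovichLE_iterate_hutchinsonOp hp hsum hτ μ ν n
  exact sub_eq_zero.1 <| tendsto_const_nhds_iff.1 <|
    tendsto_integral_sub_of_kantorovichLE (μ := fun _ => μ) (ν := fun _ => ν) hμν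
      (tendsto_pow_mul_diam_zero X hC) hf

lemma exists_hutchinsonOp_eq_self [Nonempty X] (hC : C < 1) (hp : ∀ i, 0 ≤ p i)
    (hsum : ∑ i, p i = 1) (hτ : ∀ i, LipschitzWith C (τ i)) :
    ∃ μ : Measure X, IsProbabilityMeasure μ ∧ hutchinsonOp p τ μ = μ := by
  have hmeas i := (hτ i).continuous.measurable
  obtain ⟨x₀⟩ := ‹Nonempty X›
  let u (n : ℕ) : ProbabilityMeasure X :=
    ⟨(hutchinsonOp p τ)^[n] (Measure.dirac x₀),
      isProbabilityMeasure_iterate_hutchinsonOp hp hsum hmeas _ n⟩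
  obtain ⟨μ, -, hμ⟩ := isCompact_univ.exists_mapClusterPt (f := atTop) (u := u) (by simp)
  have := isProbabilityMeasure_hutchinsonOp hp hsum hmeas (μ : Measure X)
  refine ⟨μ, inferInstance, Measure.ext_of_forall_lipschitzWith_integral_eq fun K f hf => ?_⟩
  let g : BoundedContinuousFunction X ℝ := .mkOfCompact ⟨fun x => f x - ∑ i, p i * f (τ i x),
    hf.continuous.sub <| continuous_finsetSum _ fun i _ =>
      continuous_const.mul (hf.continuous.comp (hτ i).continuous)⟩
  have hg (ν : ProbabilityMeasure X) :
      ∫ x, g x ∂(ν : Measure X) = ∫ x, f x ∂ν - ∫ x, f x ∂hutchinsonOp p τ ν :=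
    (integral_sub_integral_hutchinsonOp hp (fun i => (hτ i).continuous) _ hf.continuous).symm
  have hlim : Tendsto (fun n => ∫ x, g x ∂(u n : Measure X)) atTop (𝓝 0) := by
    simp_rw [hg]
    refine tendsto_integral_sub_of_kantorovichLE (fun n => ?_)
      (tendsto_pow_mul_diam_zero X hC) hf
    have := isProbabilityMeasure_hutchinsonOp hp hsum hmeas (Measure.dirac x₀)
    have := kantorovichLE_iterate_hutchinsonOp hp hsum hτ (Measure.dirac x₀)
      (hutchinsonOp p τ (Measure.dirac x₀)) n
    rwa [← Function.iterate_succ_apply, Function.iterate_succ_apply'] at this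
  have hμg : ∫ x, g x ∂(μ : Measure X) = 0 := eq_of_nhds_neBot <| ClusterPt.mono
    (hμ.tendsto_comp
      (ProbabilityMeasure.continuous_integral_boundedContinuousFunction g).continuousAt) hlim
  rw [hg, sub_eq_zero] at hμg
  exact hμg.symm

end FixedPoint

end Hutchinson

theorem statement13_general {X : Type*} [MetricSpace X] [CompactSpace X] [Nonempty X]
    [MeasurableSpace X] [BorelSpace X]
    (N : ℕ)
    (τ : Fin N → X → X) (C : ℝ) (hC1 : C < 1)
    (hlip : ∀ i, ∀ x y : X, dist (τ i x) (τ i y) ≤ C * dist x y)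
    (p : Fin N → ℝ) (hp : ∀ i, 0 < p i) (hsum : ∑ i, p i = 1) :
    ∃! μ : Measure X, IsProbabilityMeasure μ ∧
      ∑ i : Fin N, (ENNReal.ofReal (p i)) • (μ.map (τ i)) = μ := by
  have hτ (i : Fin N) : LipschitzWith C.toNNReal (τ i) :=
    .of_dist_le_mul fun x y => (hlip i x y).trans (by gcongr; exact C.le_coe_toNNReal)
  have hC : C.toNNReal < 1 := Real.toNNReal_lt_one.2 hC1
  have hp' (i : Fin N) : 0 ≤ p i := (hp i).le
  obtain ⟨μ, hμ, hμT⟩ := Hutchinson.exists_hutchinsonOp_eq_self hC hp' hsum hτ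
  exact ⟨μ, ⟨hμ, hμT⟩, fun ν ⟨_, hνT⟩ =>
    Hutchinson.eq_of_hutchinsonOp_eq_self hC hp' hsum hτ hνT hμT⟩

/-- Hutchinson's theorem: a contractive iterated function system `τ₁, …, τ_N` on a
nonempty compact metric space, with weights `p_i > 0`, `∑ p_i = 1`, has a unique
equilibrium (self-similar) Borel probability measure `μ = ∑ p_i·(μ∘τ_i⁻¹)`. -/
theorem statement13 {X : Type*} [MetricSpace X] [CompactSpace X] [Nonempty X]
    [MeasurableSpace X] [BorelSpace X]
    (N : ℕ) (hN : 1 ≤ N)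
    (τ : Fin N → X → X) (C : ℝ) (hC0 : 0 < C) (hC1 : C < 1)
    (hlip : ∀ i, ∀ x y : X, dist (τ i x) (τ i y) ≤ C * dist x y)
    (p : Fin N → ℝ) (hp : ∀ i, 0 < p i) (hsum : ∑ i, p i = 1) :
    ∃! μ : Measure X, IsProbabilityMeasure μ ∧
      ∑ i : Fin N, (ENNReal.ofReal (p i)) • (μ.map (τ i)) = μ :=
  statement13_general N τ C hC1 hlip p hp hsum
end

section
/- Let X be a compact metric space, N ≥ 2, and τ₁, …, τ_N : X → X continuous injective maps with pairwise disjoint images whose union is X, such that the diameters of the sets τ_{i₁}∘⋯∘τ_{i_k}(X) tend to 0 uniformly as k → ∞. Let K be a complex Hilbert space and S₁, …, S_N bounded operators on K with S_i*S_j = δ_{ij}I and ∑_{i=1}^N S_iS_i* = I, and for each f ∈ K let μ_f be the unique finite Borel measure on X with μ_f(τ_{i₁}∘⋯∘τ_{i_k}(X)) = ‖S_{i_k}*⋯S_{i₁}*f‖² for all words. Then for every f ∈ K and every i ∈ {1,…,N}: (i) (μ_f).map τ_i = μ_{S_i f}; and (ii) the covariance identity ∑_{i=1}^N (μ_{S_i^*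 f}).map τ_i = μ_f holds. -/
open MeasureTheory ENNReal

/-- The operator `S_{i₁} S_{i₂} ⋯ S_{i_k}` associated to a finite word. -/
noncomputable def wordOp {K : Type*} [NormedAddCommGroup K] [InnerProductSpace ℂ K]
    [CompleteSpace K] {N : ℕ} (S : Fin N → K →L[ℂ] K) (w : List (Fin N)) :
    K →L[ℂ] K :=
  (w.map S).prod

/-- The composition `τ_{i₁} ∘ τ_{i₂} ∘ ⋯ ∘ τ_{i_k}` of branch maps along a word. -/
def compWord {X : Type*} {N : ℕ} (τ : Fin N → X → X) (w : List (Fin N)) : X → X :=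
  (w.map τ).foldr (· ∘ ·) id

/-!
The cylinders `τ_w(X)` are pairwise nested or disjoint (the `τᵢ` are injective with disjoint
ranges), and since their diameters shrink uniformly every open set is a countable union of
cylinders; so they form a π-system generating the Borel σ-algebra, and finite measures agreeing on
cylinders are equal. On cylinders both identities are direct: `τᵢ⁻¹(τ_{j w}(X))` is `τ_w(X)` or
empty according as `i = j`, which matches `S_j^* Sᵢ = δᵢⱼ`, while on `X` itself they reduce to
`‖Sᵢ f‖ = ‖f‖` and `∑ᵢ ‖Sᵢ^* f‖² = ‖f‖²`.
-/

open Set Function Filter Topology ContinuousLinearMap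
open scoped NNReal

section Cylinders

variable {X : Type*} {N : ℕ} {τ : Fin N → X → X}

@[simp]
lemma compWord_nil : compWord τ [] = id := rfl

lemma compWord_cons (i : Fin N) (l : List (Fin N)) :
    compWord τ (i :: l) = τ i ∘ compWord τ l := rfl

lemma range_compWord_cons (i : Fin N) (l : List (Fin N)) :
    range (compWord τ (i :: l)) = τ i '' range (compWord τ l) := by
  rw [compWord_cons, range_comp]

lemma continuous_compWord [TopologicalSpace X] (hτ : ∀ i, Continuous (τ i)) :
    ∀ l : List (Fin N), Continuous (compWord τ l)
  | [] => continuous_id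
  | i :: l => (hτ i).comp (continuous_compWord hτ l)

lemma measurableSet_range_compWord [TopologicalSpace X] [CompactSpace X] [T2Space X]
    [MeasurableSpace X] [OpensMeasurableSpace X] (hτ : ∀ i, Continuous (τ i))
    (l : List (Fin N)) : MeasurableSet (range (compWord τ l)) :=
  (isCompact_range (continuous_compWord hτ l)).isClosed.measurableSet

lemma preimage_range_compWord_cons (hinj : ∀ i, Injective (τ i))
    (hdisj : Pairwise (Disjoint on fun i => range (τ i))) (i j : Fin N) (l : List (Fin N)) :
    τ i ⁻¹' range (compWord τ (j :: l)) = if i = j then range (compWord τ l) else ∅ := by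
  rw [range_compWord_cons]
  split_ifs with hij
  · subst hij
    exact preimage_image_eq _ (hinj i)
  · exact eq_empty_of_forall_notMem fun x hx =>
      (hdisj hij).notMem_of_mem_left (mem_range_self x) (image_subset_range _ _ hx)

lemma disjoint_or_subset_range_compWord (hinj : ∀ i, Injective (τ i))
    (hdisj : Pairwise (Disjoint on fun i => range (τ i))) :
    ∀ l₁ l₂ : List (Fin N), Disjoint (range (compWord τ l₁)) (range (compWord τ l₂)) ∨
      range (compWord τ l₁) ⊆ range (compWord τ l₂) ∨
      range (compWord τ l₂) ⊆ range (compWord τ l₁)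
  | [], _ => Or.inr (Or.inr (by simp))
  | _ :: _, [] => Or.inr (Or.inl (by simp))
  | i :: l₁, j :: l₂ => by
    simp only [range_compWord_cons]
    by_cases hij : i = j
    · subst hij
      rcases disjoint_or_subset_range_compWord hinj hdisj l₁ l₂ with h | h | h
      · exact Or.inl ((disjoint_image_iff (hinj i)).mpr h)
      · exact Or.inr (Or.inl (image_mono h))
      · exact Or.inr (Or.inr (image_mono h))
    · exact Or.inl ((hdisj hij).mono (image_subset_range _ _) (image_subset_range _ _))

variable (τ) in
def cylinders : Set (Set X) :=
  insert ∅ (range fun l : List (Fin N) => range (compWord τ l))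

lemma isPiSystem_cylinders (hinj : ∀ i, Injective (τ i))
    (hdisj : Pairwise (Disjoint on fun i => range (τ i))) : IsPiSystem (cylinders τ) := by
  rintro _ (rfl | ⟨l₁, rfl⟩) _ (rfl | ⟨l₂, rfl⟩) -
  · exact Or.inl (empty_inter _)
  · exact Or.inl (empty_inter _)
  · exact Or.inl (inter_empty _)
  rcases disjoint_or_subset_range_compWord hinj hdisj l₁ l₂ with h | h | h
  · exact Or.inl h.inter_eq
  · exact Or.inr ⟨l₁, (inter_eq_left.mpr h).symm⟩
  · exact Or.inr ⟨l₂, (inter_eq_right.mpr h).symm⟩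

lemma exists_mem_range_compWord_ofFn (hcover : ⋃ i, range (τ i) = univ) (k : ℕ) (x : X) :
    ∃ w : Fin k → Fin N, x ∈ range (compWord τ (List.ofFn w)) := by
  induction k generalizing x with
  | zero => exact ⟨Fin.elim0, by simp⟩
  | succ k ih =>
    obtain ⟨i, y, rfl⟩ := mem_iUnion.mp (hcover.symm ▸ mem_univ x : x ∈ ⋃ i, range (τ i))
    obtain ⟨w, hw⟩ := ih y
    refine ⟨Fin.cons i w, ?_⟩
    rw [List.ofFn_cons, range_compWord_cons]
    exact mem_image_of_mem _ hw

lemma eq_iUnion_range_compWord_of_isOpen [PseudoEMetricSpace X]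
    (hcover : ⋃ i, range (τ i) = univ)
    (hdiam : Tendsto (fun k : ℕ => ⨆ w : Fin k → Fin N,
      Metric.ediam (range (compWord τ (List.ofFn w)))) atTop (𝓝 0))
    {U : Set X} (hU : IsOpen U) :
    U = ⋃ (l : List (Fin N)) (_ : range (compWord τ l) ⊆ U), range (compWord τ l) := by
  refine (subset_antisymm ?_ (iUnion₂_subset fun _ hl => hl))
  intro x hx
  obtain ⟨ε, hε, hball⟩ := EMetric.isOpen_iff.mp hU x hx
  obtain ⟨k, hk⟩ := (hdiam.eventually_lt_const hε.bot_lt).exists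
  obtain ⟨w, hw⟩ := exists_mem_range_compWord_ofFn hcover k x
  refine mem_biUnion (fun y hy => hball ?_) hw
  calc edist y x ≤ Metric.ediam (range (compWord τ (List.ofFn w))) :=
        Metric.edist_le_ediam_of_mem hy hw
    _ ≤ _ := le_iSup (fun w : Fin k → Fin N =>
        Metric.ediam (range (compWord τ (List.ofFn w)))) w
    _ < ε := hk

lemma measurableSpace_eq_generateFrom_cylinders [EMetricSpace X] [CompactSpace X]
    [MeasurableSpace X] [BorelSpace X] (hτ : ∀ i, Continuous (τ i))
    (hcover : ⋃ i, range (τ i) = univ)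
    (hdiam : Tendsto (fun k : ℕ => ⨆ w : Fin k → Fin N,
      Metric.ediam (range (compWord τ (List.ofFn w)))) atTop (𝓝 0)) :
    ‹MeasurableSpace X› = MeasurableSpace.generateFrom (cylinders τ) := by
  refine le_antisymm ?_ (MeasurableSpace.generateFrom_le ?_)
  · rw [BorelSpace.measurable_eq (α := X)]
    refine MeasurableSpace.generateFrom_le fun U hU => ?_
    rw [eq_iUnion_range_compWord_of_isOpen hcover hdiam hU]
    exact .iUnion fun l => .iUnion fun _ =>
      MeasurableSpace.measurableSet_generateFrom (mem_insert_of_mem _ ⟨l, rfl⟩)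
  · rintro _ (rfl | ⟨l, rfl⟩)
    · exact .empty
    · exact measurableSet_range_compWord hτ l

end Cylinders

structure IsBranchingSystem {X : Type*} [PseudoEMetricSpace X] {N : ℕ}
    (τ : Fin N → X → X) : Prop where
  continuous : ∀ i, Continuous (τ i)
  injective : ∀ i, Injective (τ i)
  pairwise_disjoint_range : Pairwise (Disjoint on fun i => range (τ i))
  iUnion_range : ⋃ i, range (τ i) = univ
  tendsto_iSup_ediam : Tendsto (fun k : ℕ => ⨆ w : Fin k → Fin N,
    Metric.ediam (range (compWord τ (List.ofFn w)))) atTop (𝓝 0)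

namespace IsBranchingSystem

variable {X : Type*} [EMetricSpace X] [CompactSpace X] [MeasurableSpace X] [BorelSpace X]
  {N : ℕ} {τ : Fin N → X → X}

lemma measure_univ_eq_sum (hτ : IsBranchingSystem τ) (ν : Measure X) :
    ν univ = ∑ i, ν (range (τ i)) := by
  rw [← hτ.iUnion_range, measure_iUnion hτ.pairwise_disjoint_range
    fun i => (isCompact_range (hτ.continuous i)).isClosed.measurableSet, tsum_fintype]

lemma measure_ext (hτ : IsBranchingSystem τ) {ν₁ ν₂ : Measure X} [IsFiniteMeasure ν₁]
    (h : ∀ l, ν₁ (range (compWord τ l)) = ν₂ (range (compWord τ l))) : ν₁ = ν₂ := by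
  refine ext_of_generate_finite _ (measurableSpace_eq_generateFrom_cylinders hτ.continuous
    hτ.iUnion_range hτ.tendsto_iSup_ediam) (isPiSystem_cylinders hτ.injective
    hτ.pairwise_disjoint_range) ?_ (by simpa using h [])
  rintro _ (rfl | ⟨l, rfl⟩)
  · simp
  · exact h l

end IsBranchingSystem

section Cuntz

variable {K : Type*} [NormedAddCommGroup K] [InnerProductSpace ℂ K] [CompleteSpace K] {N : ℕ}
  (S : Fin N → K →L[ℂ] K)

lemma adjoint_wordOp_nil : adjoint (wordOp S []) = 1 := by
  rw [wordOp, List.map_nil, List.prod_nil, ← star_eq_adjoint, star_one]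

lemma adjoint_wordOp_cons (i : Fin N) (l : List (Fin N)) :
    adjoint (wordOp S (i :: l)) = adjoint (wordOp S l) * adjoint (S i) := by
  rw [wordOp, List.map_cons, List.prod_cons, ← star_eq_adjoint, star_mul, star_eq_adjoint,
    star_eq_adjoint, wordOp]

variable {S}

lemma adjoint_apply_apply_of_cuntz
    (hS : ∀ i j, adjoint (S i) * S j = if i = j then (1 : K →L[ℂ] K) else 0)
    (i j : Fin N) (g : K) : adjoint (S i) (S j g) = if i = j then g else 0 := by
  have := congr($(hS i j) g)
  split_ifs at this ⊢ <;> simpa using this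

lemma sum_norm_adjoint_apply_sq (hS : ∑ i, S i * adjoint (S i) = 1) (g : K) :
    ∑ i, ‖adjoint (S i) g‖ ^ 2 = ‖g‖ ^ 2 := by
  simp_rw [apply_norm_sq_eq_inner_adjoint_left, adjoint_adjoint]
  rw [← map_sum, ← sum_inner, ← sum_apply]
  simp_rw [← mul_def]
  rw [hS, one_apply_eq_self, inner_self_eq_norm_sq]

lemma sum_enorm_adjoint_apply_sq (hS : ∑ i, S i * adjoint (S i) = 1) (g : K) :
    ∑ i, (‖adjoint (S i) g‖₊ : ℝ≥0∞) ^ 2 = (‖g‖₊ : ℝ≥0∞) ^ 2 := by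
  have : ∑ i, ‖adjoint (S i) g‖₊ ^ 2 = ‖g‖₊ ^ 2 :=
    NNReal.eq (by push_cast; exact sum_norm_adjoint_apply_sq hS g)
  exact_mod_cast congrArg ((↑) : ℝ≥0 → ℝ≥0∞) this

end Cuntz

section Covariance

variable {X : Type*} [EMetricSpace X] [CompactSpace X] [MeasurableSpace X] [BorelSpace X]
  {N : ℕ} {τ : Fin N → X → X}
  {K : Type*} [NormedAddCommGroup K] [InnerProductSpace ℂ K] [CompleteSpace K]
  {S : Fin N → K →L[ℂ] K} (μ : K → Measure X)

lemma measure_range_compWord_eq (hτ : IsBranchingSystem τ) (hS : ∑ i, S i * adjoint (S i) = 1)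
    (hμ : ∀ (f : K) (k : ℕ), 1 ≤ k → ∀ w : Fin k → Fin N,
      μ f (range (compWord τ (List.ofFn w))) = (‖adjoint (wordOp S (List.ofFn w)) f‖₊ : ℝ≥0∞) ^ 2)
    (f : K) :
    ∀ l, μ f (range (compWord τ l)) = (‖adjoint (wordOp S l) f‖₊ : ℝ≥0∞) ^ 2
  | [] => by
    have (i : Fin N) : μ f (range (τ i)) = (‖adjoint (S i) f‖₊ : ℝ≥0∞) ^ 2 := by
      simpa [range_compWord_cons, adjoint_wordOp_cons, adjoint_wordOp_nil] using hμ f 1 le_rfl ![i]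
    simp_rw [compWord_nil, range_id, hτ.measure_univ_eq_sum, this, sum_enorm_adjoint_apply_sq hS,
      adjoint_wordOp_nil, one_apply_eq_self]
  | i :: l => by
    simpa using hμ f (l.length + 1) (Nat.le_add_left 1 _) (i :: l).get

variable [∀ f, IsFiniteMeasure (μ f)]

lemma map_measure_eq_measure_apply
    (hτ : IsBranchingSystem τ)
    (hS : ∀ i j, adjoint (S i) * S j = if i = j then (1 : K →L[ℂ] K) else 0)
    (hμ : ∀ f l, μ f (range (compWord τ l)) = (‖adjoint (wordOp S l) f‖₊ : ℝ≥0∞) ^ 2)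
    (f : K) (i : Fin N) : (μ f).map (τ i) = μ (S i f) := by
  refine hτ.measure_ext fun l => ?_
  rw [Measure.map_apply (hτ.continuous i).measurable
    (measurableSet_range_compWord hτ.continuous l), hμ]
  cases l with
  | nil =>
    have hiso : ‖S i f‖₊ = ‖f‖₊ :=
      NNReal.eq ((norm_map_iff_adjoint_comp_self _).mpr (by rw [← mul_def]; simpa using hS i i) f)
    simpa [adjoint_wordOp_nil, hiso] using hμ f []
  | cons j l =>
    rw [preimage_range_compWord_cons hτ.injective hτ.pairwise_disjoint_range, adjoint_wordOp_cons,
      mul_apply_eq_comp, adjoint_apply_apply_of_cuntz hS]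
    by_cases hij : i = j
    · subst hij
      simp [hμ]
    · simp [hij, Ne.symm hij]

lemma sum_map_measure_adjoint_apply_eq
    (hτ : IsBranchingSystem τ) (hS : ∑ i, S i * adjoint (S i) = 1)
    (hμ : ∀ f l, μ f (range (compWord τ l)) = (‖adjoint (wordOp S l) f‖₊ : ℝ≥0∞) ^ 2)
    (f : K) : ∑ i, (μ (adjoint (S i) f)).map (τ i) = μ f := by
  refine (hτ.measure_ext fun l => ?_).symm
  simp_rw [Measure.finsetSum_apply, Measure.map_apply (hτ.continuous _).measurable
    (measurableSet_range_compWord hτ.continuous l)]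
  cases l with
  | nil =>
    have huniv (g : K) : μ g univ = (‖g‖₊ : ℝ≥0∞) ^ 2 := by
      simpa [adjoint_wordOp_nil] using hμ g []
    simp [huniv, sum_enorm_adjoint_apply_sq hS]
  | cons j l =>
    simp [preimage_range_compWord_cons hτ.injective hτ.pairwise_disjoint_range, apply_ite,
      hμ, adjoint_wordOp_cons]

end Covariance

theorem statement18_general {X : Type*} [MetricSpace X] [CompactSpace X]
    [MeasurableSpace X] [BorelSpace X]
    (N : ℕ)
    (τ : Fin N → X → X) (hτc : ∀ i, Continuous (τ i))
    (hτinj : ∀ i, Function.Injective (τ i))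
    (hdisj : ∀ i j, i ≠ j → Set.range (τ i) ∩ Set.range (τ j) = ∅)
    (hcover : (⋃ i : Fin N, Set.range (τ i)) = Set.univ)
    (hdiam : Filter.Tendsto
      (fun k : ℕ => ⨆ w : Fin k → Fin N,
        EMetric.diam (Set.range (compWord τ (List.ofFn w))))
      Filter.atTop (nhds 0))
    {K : Type*} [NormedAddCommGroup K] [InnerProductSpace ℂ K] [CompleteSpace K]
    (S : Fin N → K →L[ℂ] K)
    (hCuntz1 : ∀ i j, ContinuousLinearMap.adjoint (S i) * S j
        = if i = j then (1 : K →L[ℂ] K) else 0)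
    (hCuntz2 : ∑ i : Fin N, S i * ContinuousLinearMap.adjoint (S i) = 1)
    (μ : K → Measure X) (hfin : ∀ f, IsFiniteMeasure (μ f))
    (hμ : ∀ (f : K) (k : ℕ), 1 ≤ k → ∀ w : Fin k → Fin N,
      μ f (Set.range (compWord τ (List.ofFn w)))
        = (‖ContinuousLinearMap.adjoint (wordOp S (List.ofFn w)) f‖₊ : ℝ≥0∞) ^ 2) :
    (∀ (f : K) (i : Fin N), (μ f).map (τ i) = μ (S i f))
    ∧ (∀ f : K,
        ∑ i : Fin N, (μ (ContinuousLinearMap.adjoint (S i) f)).map (τ i) = μ f) := by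
  have hτ : IsBranchingSystem τ :=
    ⟨hτc, hτinj, fun i j hij => disjoint_iff_inter_eq_empty.mpr (hdisj i j hij), hcover, hdiam⟩
  have hμ_cyl := measure_range_compWord_eq μ hτ hCuntz2 hμ
  exact ⟨map_measure_eq_measure_apply μ hτ hCuntz1 hμ_cyl,
    sum_map_measure_adjoint_apply_eq μ hτ hCuntz2 hμ_cyl⟩

/-- Covariance of the measures `μ_f(E) = ‖P(E)f‖²`:
(i) `μ_f ∘ τᵢ⁻¹ = μ_{Sᵢf}`; (ii) `∑ᵢ μ_{Sᵢ*f} ∘ τᵢ⁻¹ = μ_f` (the variable-coefficient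
generalization of Hutchinson's equilibrium equation). -/
theorem statement18 {X : Type*} [MetricSpace X] [CompactSpace X]
    [MeasurableSpace X] [BorelSpace X]
    (N : ℕ) (hN : 2 ≤ N)
    (τ : Fin N → X → X) (hτc : ∀ i, Continuous (τ i))
    (hτinj : ∀ i, Function.Injective (τ i))
    (hdisj : ∀ i j, i ≠ j → Set.range (τ i) ∩ Set.range (τ j) = ∅)
    (hcover : (⋃ i : Fin N, Set.range (τ i)) = Set.univ)
    (hdiam : Filter.Tendsto
      (fun k : ℕ => ⨆ w : Fin k → Fin N,
        EMetric.diam (Set.range (compWord τ (List.ofFn w))))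
      Filter.atTop (nhds 0))
    {K : Type*} [NormedAddCommGroup K] [InnerProductSpace ℂ K] [CompleteSpace K]
    (S : Fin N → K →L[ℂ] K)
    (hCuntz1 : ∀ i j, ContinuousLinearMap.adjoint (S i) * S j
        = if i = j then (1 : K →L[ℂ] K) else 0)
    (hCuntz2 : ∑ i : Fin N, S i * ContinuousLinearMap.adjoint (S i) = 1)
    (μ : K → Measure X) (hfin : ∀ f, IsFiniteMeasure (μ f))
    (hμ : ∀ (f : K) (k : ℕ), 1 ≤ k → ∀ w : Fin k → Fin N,
      μ f (Set.range (compWord τ (List.ofFn w)))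
        = (‖ContinuousLinearMap.adjoint (wordOp S (List.ofFn w)) f‖₊ : ℝ≥0∞) ^ 2) :
    (∀ (f : K) (i : Fin N), (μ f).map (τ i) = μ (S i f))
    ∧ (∀ f : K,
        ∑ i : Fin N, (μ (ContinuousLinearMap.adjoint (S i) f)).map (τ i) = μ f) :=
  statement18_general N τ hτc hτinj hdisj hcover hdiam S hCuntz1 hCuntz2 μ hfin hμ
end

section
/- Let 𝕋 = ℝ/ℤ be the circle group with normalized Haar (Lebesgue) probability measure, and for n ∈ ℤ let e_n ∈ L²(𝕋) denote the character e_n(x) = exp(2πi n x). Define operators on L²(𝕋) by (S₀ f)(x) = f(2x) and (S₁ f)(x) = exp(2πi x)·f(2x). Then: (i) S₀ and S₁ are isometries of L²(𝕋); (ii) they satisfy the Cuntz relations S_i*S_j = δ_{ij}I and S₀S₀* + S₁S₁* = I, so they define a representation of the Cuntz algebra O₂ on L²(𝕋); and (iii) they permute the orthonormal basis of characters: S₀ e_n = e_{2n} and S₁ e_n = e_{2n+1} for every n ∈ ℤ. -/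
open MeasureTheory

instance : Fact ((0 : ℝ) < 1) := ⟨one_pos⟩

/-! S₀ is composition with the measure-preserving doubling map and S₁ is S₀ followed by
multiplication by the unimodular e₁, so both are isometries, and e_n(2x) = e_{2n}(x) shows that they
map the Fourier basis onto its even- and odd-indexed halves. An isometry S with S (b i) = b (σ i)
on a Hilbert basis b has S* (b (σ i)) = b i and S* (b k) = 0 for k ∉ range σ, so the Cuntz
relations, checked on the basis, reduce to ℤ being the disjoint union of evens and odds. -/

open scoped InnerProductSpace

namespace HilbertBasis

variable {ι 𝕜 E F : Type*} [RCLike 𝕜] [NormedAddCommGroup E] [InnerProductSpace 𝕜 E]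
  [NormedAddCommGroup F] [InnerProductSpace 𝕜 F] (b : HilbertBasis ι 𝕜 E)

theorem ext_inner_left {x y : E} (h : ∀ i, ⟪b i, x⟫_𝕜 = ⟪b i, y⟫_𝕜) : x = y :=
  b.repr.injective <| lp.ext <| funext fun i => by
    simp only [b.repr_apply_apply, h]

theorem continuousLinearMap_ext {A B : E →L[𝕜] F} (h : ∀ i, A (b i) = B (b i)) : A = B :=
  ContinuousLinearMap.ext_on (Submodule.dense_iff_topologicalClosure_eq_top.mpr b.dense_span)
    (by rintro _ ⟨i, rfl⟩; exact h i)

end HilbertBasis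

namespace ContinuousLinearMap

variable {ι κ 𝕜 E F : Type*} [RCLike 𝕜] [NormedAddCommGroup E] [InnerProductSpace 𝕜 E]
  [CompleteSpace E] [NormedAddCommGroup F] [InnerProductSpace 𝕜 F] [CompleteSpace F]
  {b : HilbertBasis ι 𝕜 E} {c : HilbertBasis κ 𝕜 F}

theorem adjoint_apply_eq_zero_of_notMem_range {S : E →L[𝕜] F} {σ : ι → κ}
    (hS : ∀ i, S (b i) = c (σ i)) {k : κ} (hk : k ∉ Set.range σ) : adjoint S (c k) = 0 :=
  b.ext_inner_left fun i => by
    rw [adjoint_inner_right, hS, inner_zero_right,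
      c.orthonormal.inner_eq_zero fun h => hk ⟨i, h⟩]

theorem adjoint_mul_eq_zero_of_disjoint_range {S₀ S₁ : E →L[𝕜] E} {σ₀ σ₁ : ι → ι}
    (hS₀ : ∀ i, S₀ (b i) = b (σ₀ i)) (hS₁ : ∀ i, S₁ (b i) = b (σ₁ i))
    (hσ : Disjoint (Set.range σ₀) (Set.range σ₁)) : adjoint S₀ * S₁ = 0 :=
  b.continuousLinearMap_ext fun i => by
    rw [mul_apply_eq_comp, hS₁, zero_apply,
      adjoint_apply_eq_zero_of_notMem_range hS₀ (hσ.notMem_of_mem_right ⟨i, rfl⟩)]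

theorem mul_adjoint_add_mul_adjoint_eq_one {S₀ S₁ : E →L[𝕜] E} {σ₀ σ₁ : ι → ι}
    (hS₀ : ∀ i, S₀ (b i) = b (σ₀ i)) (hS₁ : ∀ i, S₁ (b i) = b (σ₁ i))
    (hiso₀ : adjoint S₀ * S₀ = 1) (hiso₁ : adjoint S₁ * S₁ = 1)
    (hσ : IsCompl (Set.range σ₀) (Set.range σ₁)) :
    S₀ * adjoint S₀ + S₁ * adjoint S₁ = 1 := by
  have inv₀ (i : ι) : adjoint S₀ (b (σ₀ i)) = b i := by
    rw [← hS₀, ← mul_apply_eq_comp, hiso₀, one_apply_eq_self]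
  have inv₁ (i : ι) : adjoint S₁ (b (σ₁ i)) = b i := by
    rw [← hS₁, ← mul_apply_eq_comp, hiso₁, one_apply_eq_self]
  refine b.continuousLinearMap_ext fun k => ?_
  rcases hσ.codisjoint.top_le (Set.mem_univ k) with ⟨i, rfl⟩ | ⟨i, rfl⟩
  · rw [add_apply, mul_apply_eq_comp, mul_apply_eq_comp, inv₀, hS₀, one_apply_eq_self,
      adjoint_apply_eq_zero_of_notMem_range hS₁ (hσ.disjoint.notMem_of_mem_left ⟨i, rfl⟩),
      map_zero, add_zero]
  · rw [add_apply, mul_apply_eq_comp, mul_apply_eq_comp, inv₁, hS₁, one_apply_eq_self,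
      adjoint_apply_eq_zero_of_notMem_range hS₀ (hσ.disjoint.notMem_of_mem_right ⟨i, rfl⟩),
      map_zero, zero_add]

end ContinuousLinearMap

open scoped ENNReal

namespace MeasureTheory.Lp

variable {α 𝕜 E : Type*} [MeasurableSpace α] {μ : Measure α} [RCLike 𝕜]
  [NormedAddCommGroup E] [NormedSpace 𝕜 E] {p : ℝ≥0∞} [Fact (1 ≤ p)]

theorem coeFn_holder_lsmul (g : Lp 𝕜 ∞ μ) (f : Lp E p μ) :
    (ContinuousLinearMap.lsmul 𝕜 𝕜).holderL μ ∞ p p g f =ᵐ[μ] fun x => g x • f x :=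
  ContinuousLinearMap.coeFn_holder _ g f

noncomputable def smulUnimodularₗᵢ (g : Lp 𝕜 ∞ μ) (hg : ∀ᵐ x ∂μ, ‖g x‖ = 1) :
    Lp E p μ →ₗᵢ[𝕜] Lp E p μ where
  toLinearMap := ((ContinuousLinearMap.lsmul 𝕜 𝕜).holderL μ ∞ p p g).toLinearMap
  norm_map' f := by
    change ‖(ContinuousLinearMap.lsmul 𝕜 𝕜).holderL μ ∞ p p g f‖ = ‖f‖
    simp only [Lp.norm_def]
    refine congrArg ENNReal.toReal (eLpNorm_congr_norm_ae ?_)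
    filter_upwards [coeFn_holder_lsmul g f, hg] with x hgf hgx
    rw [hgf, norm_smul, hgx, one_mul]

theorem coeFn_smulUnimodularₗᵢ (g : Lp 𝕜 ∞ μ) (hg : ∀ᵐ x ∂μ, ‖g x‖ = 1) (f : Lp E p μ) :
    smulUnimodularₗᵢ g hg f =ᵐ[μ] fun x => g x • f x :=
  coeFn_holder_lsmul g f

end MeasureTheory.Lp

namespace AddCircle

variable {T : ℝ} [Fact (0 < T)] {p : ℝ≥0∞} [Fact (1 ≤ p)]

theorem measurePreserving_add_self :
    MeasurePreserving (fun x : AddCircle T => x + x) haarAddCircle haarAddCircle := by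
  simpa only [two_zsmul] using haarAddCircle.measurePreserving_zsmul (n := 2) two_ne_zero

omit [Fact (0 < T)] in
theorem fourier_add_self (n : ℤ) (x : AddCircle T) : fourier n (x + x) = fourier (2 * n) x := by
  rw [fourier_apply, fourier_apply, two_mul, add_zsmul, smul_add]

noncomputable def doublingₗᵢ :
    Lp ℂ p (haarAddCircle (T := T)) →ₗᵢ[ℂ] Lp ℂ p (haarAddCircle (T := T)) :=
  Lp.compMeasurePreservingₗᵢ ℂ _ measurePreserving_add_self

theorem coeFn_doublingₗᵢ (f : Lp ℂ p (haarAddCircle (T := T))) :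
    doublingₗᵢ f =ᵐ[haarAddCircle] fun x => f (x + x) :=
  Lp.coeFn_compMeasurePreserving f _

theorem doublingₗᵢ_fourierLp (n : ℤ) :
    doublingₗᵢ (fourierLp (T := T) p n) = fourierLp p (2 * n) := by
  refine Lp.ext ?_
  filter_upwards [coeFn_doublingₗᵢ (fourierLp p n),
    measurePreserving_add_self.quasiMeasurePreserving.ae_eq_comp (coeFn_fourierLp p n),
    coeFn_fourierLp p (2 * n)] with x hS hn h2n
  rw [hS, h2n, ← fourier_add_self]
  exact hn

theorem ae_norm_fourierLp_top (m : ℤ) :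
    ∀ᵐ x ∂haarAddCircle, ‖fourierLp (T := T) ∞ m x‖ = 1 := by
  filter_upwards [coeFn_fourierLp ∞ m] with x hx
  rw [hx, fourier_apply, Circle.norm_coe]

noncomputable def fourierSMulₗᵢ (m : ℤ) :
    Lp ℂ p (haarAddCircle (T := T)) →ₗᵢ[ℂ] Lp ℂ p (haarAddCircle (T := T)) :=
  Lp.smulUnimodularₗᵢ (E := ℂ) (fourierLp ∞ m) (ae_norm_fourierLp_top m)

theorem coeFn_fourierSMulₗᵢ (m : ℤ) (f : Lp ℂ p (haarAddCircle (T := T))) :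
    fourierSMulₗᵢ m f =ᵐ[haarAddCircle] fun x => fourier m x * f x := by
  filter_upwards [Lp.coeFn_smulUnimodularₗᵢ (fourierLp ∞ m) (ae_norm_fourierLp_top m) f,
    coeFn_fourierLp ∞ m] with x hf hm
  rw [fourierSMulₗᵢ, hf, hm, smul_eq_mul]

theorem fourierSMulₗᵢ_fourierLp (m n : ℤ) :
    fourierSMulₗᵢ m (fourierLp (T := T) p n) = fourierLp p (m + n) := by
  refine Lp.ext ?_
  filter_upwards [coeFn_fourierSMulₗᵢ m (fourierLp p n), coeFn_fourierLp p n,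
    coeFn_fourierLp p (m + n)] with x hS hn hmn
  rw [hS, hn, hmn, fourier_add]

theorem coeFn_fourierSMulₗᵢ_doublingₗᵢ (m : ℤ) (f : Lp ℂ p (haarAddCircle (T := T))) :
    fourierSMulₗᵢ m (doublingₗᵢ f) =ᵐ[haarAddCircle] fun x => fourier m x * f (x + x) := by
  filter_upwards [coeFn_fourierSMulₗᵢ m (doublingₗᵢ f), coeFn_doublingₗᵢ f] with x hm hd
  rw [hm, hd]

end AddCircle

/-- The operators `(S₀f)(x) = f(2x)` and `(S₁f)(x) = e^{2πix}·f(2x)` on `L²(𝕋)`,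
`𝕋 = ℝ/ℤ` with normalized Haar measure, are isometries satisfying the Cuntz relations
(a representation of `O₂`), and they permute the Fourier basis:
`S₀ e_n = e_{2n}`, `S₁ e_n = e_{2n+1}`. -/
theorem statement19 :
    ∃ S₀ S₁ : Lp ℂ 2 (AddCircle.haarAddCircle : Measure (AddCircle (1 : ℝ))) →L[ℂ]
        Lp ℂ 2 (AddCircle.haarAddCircle : Measure (AddCircle (1 : ℝ))),
      (∀ f : Lp ℂ 2 (AddCircle.haarAddCircle : Measure (AddCircle (1 : ℝ))),
          ⇑(S₀ f) =ᵐ[(AddCircle.haarAddCircle : Measure (AddCircle (1 : ℝ)))]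
            fun x => f (x + x))
      ∧ (∀ f : Lp ℂ 2 (AddCircle.haarAddCircle : Measure (AddCircle (1 : ℝ))),
          ⇑(S₁ f) =ᵐ[(AddCircle.haarAddCircle : Measure (AddCircle (1 : ℝ)))]
            fun x => fourier 1 x * f (x + x))
      ∧ (∀ f, ‖S₀ f‖ = ‖f‖) ∧ (∀ f, ‖S₁ f‖ = ‖f‖)
      ∧ ContinuousLinearMap.adjoint S₀ * S₀ = 1
      ∧ ContinuousLinearMap.adjoint S₁ * S₁ = 1
      ∧ ContinuousLinearMap.adjoint S₀ * S₁ = 0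
      ∧ ContinuousLinearMap.adjoint S₁ * S₀ = 0
      ∧ S₀ * ContinuousLinearMap.adjoint S₀ + S₁ * ContinuousLinearMap.adjoint S₁ = 1
      ∧ (∀ n : ℤ, S₀ (fourierLp 2 n) = fourierLp 2 (2 * n))
      ∧ (∀ n : ℤ, S₁ (fourierLp 2 n) = fourierLp 2 (2 * n + 1)) := by
  let V₀ := AddCircle.doublingₗᵢ (T := 1) (p := 2)
  let V₁ := (AddCircle.fourierSMulₗᵢ 1).comp V₀
  have hV₀ (n : ℤ) : V₀ (fourierLp 2 n) = fourierLp 2 (2 * n) := AddCircle.doublingₗᵢ_fourierLp n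
  have hV₁ (n : ℤ) : V₁ (fourierLp 2 n) = fourierLp 2 (2 * n + 1) := by
    change AddCircle.fourierSMulₗᵢ 1 (V₀ (fourierLp 2 n)) = _
    rw [hV₀, AddCircle.fourierSMulₗᵢ_fourierLp, add_comm]
  have hb₀ : ∀ n, V₀ (fourierBasis n) = fourierBasis (2 * n) := by rwa [coe_fourierBasis]
  have hb₁ : ∀ n, V₁ (fourierBasis n) = fourierBasis (2 * n + 1) := by rwa [coe_fourierBasis]
  have hσ : IsCompl (Set.range (2 * · : ℤ → ℤ)) (Set.range (2 * · + 1)) := by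
    rw [range_two_mul, range_two_mul_add_one]
    exact Int.isCompl_even_odd
  exact ⟨V₀.toContinuousLinearMap, V₁.toContinuousLinearMap, AddCircle.coeFn_doublingₗᵢ,
    AddCircle.coeFn_fourierSMulₗᵢ_doublingₗᵢ 1, V₀.norm_map, V₁.norm_map,
    V₀.adjoint_comp_self, V₁.adjoint_comp_self,
    ContinuousLinearMap.adjoint_mul_eq_zero_of_disjoint_range hb₀ hb₁ hσ.disjoint,
    ContinuousLinearMap.adjoint_mul_eq_zero_of_disjoint_range hb₁ hb₀ hσ.disjoint.symm,
    ContinuousLinearMap.mul_adjoint_add_mul_adjoint_eq_one hb₀ hb₁ V₀.adjoint_comp_self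
      V₁.adjoint_comp_self hσ, hV₀, hV₁⟩
end
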